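/- Let G = (V, ω) be a finite connected weighted graph with vertex measure μ. Let h, f : V → ℝ with f_i > 0 for all i ∈ V, and let real numbers α, p satisfy α ≥ p > 1. Then there exist a constant λ ∈ ℝ and a function φ : V → ℝ with φ_i > 0 for all i ∈ V such that (Δ_p φ)_i + h_i φ_i^{p-1} = λ f_i φ_i^{α-1} for every i ∈ V. -/

import Mathlib

/-!
Minimise the Yamabe energy `J(φ) = ½ ∑ᵢⱼ ωᵢⱼ |φⱼ - φᵢ|^p - ∑ᵢ μᵢ hᵢ |φᵢ|^p` on the compact level set
`C(φ) = ∑ᵢ μᵢ fᵢ |φᵢ|^α = 1`. Replacing a minimiser `φ` by `|φ|` does not increase `J`, so there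
is a nonnegative minimiser. `J` and `C` are positively homogeneous of degrees `p` and `α`, so
`J · C^(-p/α)` is scale invariant and the minimiser is a free critical point of it;
differentiating along the coordinate directions gives the equation with `λ = -J(φ)`. At a zero of
`φ` the equation forces `∑ⱼ ωᵢⱼ φⱼ^(p-1) = 0`, so zeros propagate along edges, and by
connectedness `φ` would vanish identically, contradicting the constraint.
-/

/-- The discrete `p`-Laplacian on a finite weighted graph:
`(Δ_p φ)_i = (1/μ_i) ∑_j ω_ij |φ_j − φ_i|^{p−2} (φ_j − φ_i)`. -/
noncomputable def pLaplacian {V : Type*} [Fintype V] (μ : V → ℝ) (ω : V → V → ℝ)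
    (p : ℝ) (φ : V → ℝ) (i : V) : ℝ :=
  (1 / μ i) * ∑ j, ω i j * |φ j - φ i| ^ (p - 2) * (φ j - φ i)

open Real

lemma abs_mul_rpow_of_nonneg {s : ℝ} (hs : 0 ≤ s) (x q : ℝ) : |s * x| ^ q = s ^ q * |x| ^ q := by
  rw [abs_mul, abs_of_nonneg hs, mul_rpow hs (abs_nonneg x)]

lemma abs_rpow_sub_two_mul_self {x : ℝ} (hx : 0 < x) (q : ℝ) : |x| ^ (q - 2) * x = x ^ (q - 1) := by
  rw [abs_of_pos hx, ← rpow_add_one hx.ne']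
  ring_nf

lemma hasDerivAt_abs_add_mul_rpow (a b : ℝ) {q : ℝ} (hq : 1 < q) :
    HasDerivAt (fun t : ℝ => |a + t * b| ^ q) (q * |a| ^ (q - 2) * a * b) 0 := by
  have hline : HasDerivAt (fun t : ℝ => a + t * b) b 0 := by
    simpa using ((hasDerivAt_id (0 : ℝ)).mul_const b).const_add a
  exact (hasDerivAt_abs_rpow a hq).comp_of_eq 0 hline (by simp)

lemma sum_sum_mul_sub_eq_of_antisymm {V : Type*} [Fintype V] {F : V → V → ℝ}
    (hF : ∀ i j, F j i = -F i j) (v : V → ℝ) :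
    ∑ i, ∑ j, F i j * (v j - v i) = -2 * ∑ i, v i * ∑ j, F i j := by
  have hswap : ∑ i, ∑ j, F i j * v j = -∑ i, v i * ∑ j, F i j := by
    rw [Finset.sum_comm]
    simp only [Finset.mul_sum, ← Finset.sum_neg_distrib]
    exact Finset.sum_congr rfl fun i _ => Finset.sum_congr rfl fun j _ => by rw [hF]; ring
  have hdiag : ∑ i, ∑ j, F i j * v i = ∑ i, v i * ∑ j, F i j := by
    simp only [Finset.mul_sum, mul_comm]
  rw [← hdiag] at hswap ⊢
  simp only [mul_sub, Finset.sum_sub_distrib, hswap]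
  ring

lemma forall_of_connected_of_step {V : Type*} {r : V → V → Prop}
    (hconn : ∀ i j, Relation.ReflTransGen r i j) {P : V → Prop} (hstep : ∀ a b, r a b → P a → P b)
    {i : V} (hi : P i) (j : V) : P j := by
  induction hconn i j with
  | refl => exact hi
  | tail _ hbc ih => exact hstep _ _ hbc ih

section Homogeneous

variable {E : Type*} [AddCommGroup E] [Module ℝ E]

lemma apply_rpow_neg_inv_smul_eq_one_of_homogeneous {C : E → ℝ} {α : ℝ} (hα : α ≠ 0)
    (hC : ∀ s : ℝ, 0 ≤ s → ∀ x, C (s • x) = s ^ α * C x) {x : E} (hx : 0 < C x) :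
    C (C x ^ (-α⁻¹) • x) = 1 := by
  rw [hC _ (rpow_nonneg hx.le _), ← rpow_mul hx.le, neg_mul, inv_mul_cancel₀ hα, rpow_neg_one,
    inv_mul_cancel₀ hx.ne']

lemma IsMinOn.hasDerivAt_eq_of_homogeneous {J C : E → ℝ} {p α : ℝ} (hα : α ≠ 0)
    (hJ : ∀ s : ℝ, 0 ≤ s → ∀ x, J (s • x) = s ^ p * J x)
    (hC : ∀ s : ℝ, 0 ≤ s → ∀ x, C (s • x) = s ^ α * C x)
    {φ v : E} (hmin : IsMinOn J {x | C x = 1} φ) (hφ : C φ = 1) {J' C' : ℝ}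
    (hJ' : HasDerivAt (fun t : ℝ => J (φ + t • v)) J' 0)
    (hC' : HasDerivAt (fun t : ℝ => C (φ + t • v)) C' 0) :
    J' = p / α * J φ * C' := by
  have hC0 : C (φ + (0 : ℝ) • v) = 1 := by rw [zero_smul, add_zero, hφ]
  have hCpos : ∀ᶠ t in nhds (0 : ℝ), 0 < C (φ + t • v) :=
    hC'.continuousAt.eventually (eventually_gt_nhds (by simp [hφ]))
  -- `J x * C x ^ (-p/α)` is scale invariant, so it is minimal at `φ` among all `x` with `C x > 0`.
  have hlocal : IsLocalMin (fun t : ℝ => J (φ + t • v) * C (φ + t • v) ^ (-(p / α))) 0 := by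
    filter_upwards [hCpos] with t ht
    have hscaled := isMinOn_iff.1 hmin _
      (apply_rpow_neg_inv_smul_eq_one_of_homogeneous hα hC ht)
    rw [hJ _ (rpow_nonneg ht.le _), ← rpow_mul ht.le] at hscaled
    rw [zero_smul, add_zero, hφ, one_rpow, mul_one, mul_comm]
    convert hscaled using 3
    ring
  have hderiv := hlocal.hasDerivAt_eq_zero (hJ'.mul (hC'.rpow_const (Or.inl (by simp [hφ]))))
  rw [hC0, zero_smul, add_zero, one_rpow, one_rpow] at hderiv
  field_simp at hderiv ⊢
  linear_combination hderiv

end Homogeneous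

section Graph

variable {V : Type*} [Fintype V]

noncomputable def weightedPowerSum (m : V → ℝ) (q : ℝ) (φ : V → ℝ) : ℝ :=
  ∑ i, m i * |φ i| ^ q

noncomputable def pDirichletEnergy (ω : V → V → ℝ) (p : ℝ) (φ : V → ℝ) : ℝ :=
  ∑ i, ∑ j, ω i j * |φ j - φ i| ^ p

noncomputable def yamabeFunctional (μ : V → ℝ) (ω : V → V → ℝ) (h : V → ℝ) (p : ℝ)
    (φ : V → ℝ) : ℝ :=
  pDirichletEnergy ω p φ / 2 - weightedPowerSum (μ * h) p φ

lemma weightedPowerSum_smul (m : V → ℝ) (q : ℝ) {s : ℝ} (hs : 0 ≤ s) (φ : V → ℝ) :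
    weightedPowerSum m q (s • φ) = s ^ q * weightedPowerSum m q φ := by
  simp only [weightedPowerSum, Pi.smul_apply, smul_eq_mul, abs_mul_rpow_of_nonneg hs,
    Finset.mul_sum]
  exact Finset.sum_congr rfl fun i _ => by ring

lemma pDirichletEnergy_smul (ω : V → V → ℝ) (p : ℝ) {s : ℝ} (hs : 0 ≤ s) (φ : V → ℝ) :
    pDirichletEnergy ω p (s • φ) = s ^ p * pDirichletEnergy ω p φ := by
  simp only [pDirichletEnergy, Pi.smul_apply, smul_eq_mul, ← mul_sub,
    abs_mul_rpow_of_nonneg hs, Finset.mul_sum]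
  exact Finset.sum_congr rfl fun i _ => Finset.sum_congr rfl fun j _ => by ring

lemma yamabeFunctional_smul (μ : V → ℝ) (ω : V → V → ℝ) (h : V → ℝ) (p : ℝ) {s : ℝ}
    (hs : 0 ≤ s) (φ : V → ℝ) :
    yamabeFunctional μ ω h p (s • φ) = s ^ p * yamabeFunctional μ ω h p φ := by
  rw [yamabeFunctional, yamabeFunctional, pDirichletEnergy_smul ω p hs,
    weightedPowerSum_smul _ p hs]
  ring

lemma continuous_weightedPowerSum (m : V → ℝ) {q : ℝ} (hq : 0 ≤ q) :
    Continuous (weightedPowerSum m q) := by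
  unfold weightedPowerSum
  fun_prop (disch := exact fun _ => Or.inr hq)

lemma continuous_pDirichletEnergy (ω : V → V → ℝ) {p : ℝ} (hp : 0 ≤ p) :
    Continuous (pDirichletEnergy ω p) := by
  unfold pDirichletEnergy
  fun_prop (disch := exact fun _ => Or.inr hp)

lemma continuous_yamabeFunctional (μ : V → ℝ) (ω : V → V → ℝ) (h : V → ℝ) {p : ℝ}
    (hp : 0 ≤ p) : Continuous (yamabeFunctional μ ω h p) :=
  ((continuous_pDirichletEnergy ω hp).div_const 2).sub (continuous_weightedPowerSum _ hp)

lemma weightedPowerSum_abs (m : V → ℝ) (q : ℝ) (φ : V → ℝ) :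
    weightedPowerSum m q (fun i => |φ i|) = weightedPowerSum m q φ := by
  simp only [weightedPowerSum, abs_abs]

lemma pDirichletEnergy_abs_le {ω : V → V → ℝ} (hω : ∀ i j, 0 ≤ ω i j) {p : ℝ} (hp : 0 ≤ p)
    (φ : V → ℝ) : pDirichletEnergy ω p (fun i => |φ i|) ≤ pDirichletEnergy ω p φ :=
  Finset.sum_le_sum fun i _ => Finset.sum_le_sum fun j _ =>
    mul_le_mul_of_nonneg_left
      (rpow_le_rpow (abs_nonneg _) (abs_abs_sub_abs_le_abs_sub _ _) hp) (hω i j)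

lemma yamabeFunctional_abs_le (μ : V → ℝ) {ω : V → V → ℝ} (hω : ∀ i j, 0 ≤ ω i j)
    (h : V → ℝ) {p : ℝ} (hp : 0 ≤ p) (φ : V → ℝ) :
    yamabeFunctional μ ω h p (fun i => |φ i|) ≤ yamabeFunctional μ ω h p φ := by
  unfold yamabeFunctional
  rw [weightedPowerSum_abs]
  linarith [pDirichletEnergy_abs_le hω hp φ]

lemma hasDerivAt_weightedPowerSum (m : V → ℝ) {q : ℝ} (hq : 1 < q) (φ v : V → ℝ) :
    HasDerivAt (fun t : ℝ => weightedPowerSum m q (φ + t • v))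
      (∑ i, v i * (m i * (q * (|φ i| ^ (q - 2) * φ i)))) 0 := by
  simp only [weightedPowerSum, Pi.add_apply, Pi.smul_apply, smul_eq_mul]
  refine (HasDerivAt.fun_sum fun i _ =>
    (hasDerivAt_abs_add_mul_rpow (φ i) (v i) hq).const_mul (m i)).congr_deriv ?_
  exact Finset.sum_congr rfl fun i _ => by ring

lemma hasDerivAt_pDirichletEnergy {ω : V → V → ℝ} (hω : ∀ i j, ω i j = ω j i) {p : ℝ}
    (hp : 1 < p) (φ v : V → ℝ) :
    HasDerivAt (fun t : ℝ => pDirichletEnergy ω p (φ + t • v))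
      (∑ i, v i * (-2 * p * ∑ j, ω i j * |φ j - φ i| ^ (p - 2) * (φ j - φ i))) 0 := by
  have hdiff : ∀ t : ℝ, ∀ i j, (φ + t • v) j - (φ + t • v) i = (φ j - φ i) + t * (v j - v i) :=
    fun t i j => by simp only [Pi.add_apply, Pi.smul_apply, smul_eq_mul]; ring
  simp only [pDirichletEnergy, hdiff]
  refine (HasDerivAt.fun_sum fun i _ => HasDerivAt.fun_sum fun j _ =>
    (hasDerivAt_abs_add_mul_rpow (φ j - φ i) (v j - v i) hp).const_mul (ω i j)).congr_deriv ?_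
  set F : V → V → ℝ := fun i j => p * ω i j * |φ j - φ i| ^ (p - 2) * (φ j - φ i)
  have hF : ∀ i j, F j i = -F i j := fun i j => by
    simp only [F]; rw [hω j i, abs_sub_comm]; ring
  calc ∑ i, ∑ j, ω i j * (p * |φ j - φ i| ^ (p - 2) * (φ j - φ i) * (v j - v i))
      = ∑ i, ∑ j, F i j * (v j - v i) :=
        Finset.sum_congr rfl fun i _ => Finset.sum_congr rfl fun j _ => by ring
    _ = _ := by
        rw [sum_sum_mul_sub_eq_of_antisymm hF, Finset.mul_sum]
        refine Finset.sum_congr rfl fun i _ => ?_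
        simp only [F, Finset.mul_sum]
        exact Finset.sum_congr rfl fun j _ => by ring

lemma hasDerivAt_yamabeFunctional (μ : V → ℝ) {ω : V → V → ℝ} (hω : ∀ i j, ω i j = ω j i)
    (h : V → ℝ) {p : ℝ} (hp : 1 < p) (φ v : V → ℝ) :
    HasDerivAt (fun t : ℝ => yamabeFunctional μ ω h p (φ + t • v))
      (∑ i, v i * (-p * (∑ j, ω i j * |φ j - φ i| ^ (p - 2) * (φ j - φ i)
        + μ i * h i * (|φ i| ^ (p - 2) * φ i)))) 0 := by
  refine (((hasDerivAt_pDirichletEnergy hω hp φ v).div_const 2).sub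
    (hasDerivAt_weightedPowerSum (μ * h) hp φ v)).congr_deriv ?_
  rw [Finset.sum_div, ← Finset.sum_sub_distrib]
  exact Finset.sum_congr rfl fun i _ => by simp only [Pi.mul_apply]; ring

lemma isCompact_weightedPowerSum_eq_one {m : V → ℝ} (hm : ∀ i, 0 < m i) {q : ℝ} (hq : 0 < q) :
    IsCompact {φ : V → ℝ | weightedPowerSum m q φ = 1} := by
  refine Metric.isCompact_of_isClosed_isBounded
    (isClosed_eq (continuous_weightedPowerSum m hq.le) continuous_const) ?_
  refine (Bornology.IsBounded.pi fun i => Metric.isBounded_closedBall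
    (x := (0 : ℝ)) (r := (m i)⁻¹ ^ q⁻¹)).subset fun φ hφ i _ => ?_
  have hterm : m i * |φ i| ^ q ≤ 1 :=
    hφ ▸ Finset.single_le_sum (fun j _ => mul_nonneg (hm j).le (rpow_nonneg (abs_nonneg _) q))
      (Finset.mem_univ i)
  rw [Metric.mem_closedBall, dist_zero_right, norm_eq_abs,
    le_rpow_inv_iff_of_pos (abs_nonneg _) (inv_nonneg.2 (hm i).le) hq, ← one_div,
    le_div_iff₀ (hm i), mul_comm]
  exact hterm

lemma nonempty_weightedPowerSum_eq_one [Nonempty V] {m : V → ℝ} (hm : ∀ i, 0 < m i) {q : ℝ}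
    (hq : q ≠ 0) : {φ : V → ℝ | weightedPowerSum m q φ = 1}.Nonempty := by
  have hone : 0 < weightedPowerSum m q 1 := by
    simpa [weightedPowerSum] using Finset.sum_pos (fun i _ => hm i) Finset.univ_nonempty
  exact ⟨_, apply_rpow_neg_inv_smul_eq_one_of_homogeneous hq
    (fun _ hs x => weightedPowerSum_smul m q hs x) hone⟩

lemma yamabeFunctional_euler_lagrange {μ h f : V → ℝ} {ω : V → V → ℝ}
    (hω : ∀ i j, ω i j = ω j i) {p α : ℝ} (hp : 1 < p) (hα : 1 < α) {φ : V → ℝ}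
    (hmin : IsMinOn (yamabeFunctional μ ω h p) {ψ | weightedPowerSum (μ * f) α ψ = 1} φ)
    (hφ : weightedPowerSum (μ * f) α φ = 1) (i : V) :
    ∑ j, ω i j * |φ j - φ i| ^ (p - 2) * (φ j - φ i) + μ i * h i * (|φ i| ^ (p - 2) * φ i)
      = -yamabeFunctional μ ω h p φ * (μ i * f i * (|φ i| ^ (α - 2) * φ i)) := by
  classical
  have key := hmin.hasDerivAt_eq_of_homogeneous (by positivity)
    (fun _ hs x => yamabeFunctional_smul μ ω h p hs x)
    (fun _ hs x => weightedPowerSum_smul (μ * f) α hs x) hφ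
    (hasDerivAt_yamabeFunctional μ hω h hp φ (Pi.single i 1))
    (hasDerivAt_weightedPowerSum (μ * f) hα φ (Pi.single i 1))
  simp only [Pi.single_apply, ite_mul, one_mul, zero_mul, Finset.sum_ite_eq', Finset.mem_univ,
    if_true, Pi.mul_apply] at key
  have hcancel : p / α * yamabeFunctional μ ω h p φ * (μ i * f i * (α * (|φ i| ^ (α - 2) * φ i)))
      = p * (yamabeFunctional μ ω h p φ * (μ i * f i * (|φ i| ^ (α - 2) * φ i))) := by
    field_simp
  rw [hcancel] at key
  exact mul_left_cancel₀ (by positivity : p ≠ 0) (by linear_combination -key)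

lemma eq_zero_of_adj_of_sum_eq_zero {ω : V → V → ℝ} {a b : V} (hω : ∀ j, 0 ≤ ω a j)
    (hab : 0 < ω a b) {φ : V → ℝ} (hφ : ∀ j, 0 ≤ φ j) (ha : φ a = 0) {p : ℝ}
    (hsum : ∑ j, ω a j * |φ j - φ a| ^ (p - 2) * (φ j - φ a) = 0) : φ b = 0 := by
  simp only [ha, sub_zero] at hsum
  have hb := (Finset.sum_eq_zero_iff_of_nonneg fun j _ =>
    mul_nonneg (mul_nonneg (hω j) (rpow_nonneg (abs_nonneg _) _)) (hφ j)).1 hsum b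
    (Finset.mem_univ b)
  rcases mul_eq_zero.1 hb with hb | hb
  · rcases mul_eq_zero.1 hb with hω0 | hpow
    · exact absurd hω0 hab.ne'
    · exact abs_eq_zero.1 ((rpow_eq_zero_iff_of_nonneg (abs_nonneg _)).1 hpow).1
  · exact hb

lemma forall_pos_of_sum_eq_zero_at_zeros {ω : V → V → ℝ} (hω : ∀ i j, 0 ≤ ω i j)
    (hconn : ∀ i j : V, Relation.ReflTransGen (fun a b => 0 < ω a b) i j) {φ : V → ℝ}
    (hφ : ∀ j, 0 ≤ φ j) {p : ℝ}
    (hsum : ∀ a, φ a = 0 → ∑ j, ω a j * |φ j - φ a| ^ (p - 2) * (φ j - φ a) = 0)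
    (hne : ∃ j, φ j ≠ 0) (i : V) : 0 < φ i := by
  refine (hφ i).lt_of_ne fun hi => ?_
  obtain ⟨j, hj⟩ := hne
  exact hj (forall_of_connected_of_step hconn (P := fun j => φ j = 0)
    (fun a b hab ha => eq_zero_of_adj_of_sum_eq_zero (hω a) hab hφ ha (hsum a ha)) hi.symm j)

end Graph

theorem pth_yamabe_equation_has_positive_solution_general
    {V : Type*} [Fintype V] [Nonempty V]
    (μ : V → ℝ) (hμ : ∀ i, 0 < μ i)
    (ω : V → V → ℝ) (hωsym : ∀ i j, ω i j = ω j i)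
    (hωnonneg : ∀ i j, 0 ≤ ω i j)
    (hconn : ∀ i j : V, Relation.ReflTransGen (fun a b => 0 < ω a b) i j)
    (h f : V → ℝ) (hf : ∀ i, 0 < f i)
    (p α : ℝ) (hp : 1 < p) (hpα : p ≤ α) :
    ∃ (lam : ℝ) (φ : V → ℝ), (∀ i, 0 < φ i) ∧
      ∀ i, pLaplacian μ ω p φ i + h i * φ i ^ (p - 1) = lam * f i * φ i ^ (α - 1) := by
  have hα : 1 < α := hp.trans_le hpα
  have hμf : ∀ i, 0 < (μ * f) i := fun i => mul_pos (hμ i) (hf i)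
  obtain ⟨φ₀, hφ₀, hmin₀⟩ :=
    (isCompact_weightedPowerSum_eq_one (q := α) hμf (by positivity)).exists_isMinOn
    (nonempty_weightedPowerSum_eq_one hμf (by positivity))
    (continuous_yamabeFunctional μ ω h (by positivity)).continuousOn
  set φ : V → ℝ := fun i => |φ₀ i|
  have hφ : weightedPowerSum (μ * f) α φ = 1 := (weightedPowerSum_abs _ _ _).trans hφ₀
  have hmin : IsMinOn (yamabeFunctional μ ω h p) {ψ | weightedPowerSum (μ * f) α ψ = 1} φ :=
    isMinOn_iff.2 fun ψ hψ =>
      (yamabeFunctional_abs_le μ hωnonneg h (by positivity) φ₀).trans (isMinOn_iff.1 hmin₀ ψ hψ)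
  have hEL := yamabeFunctional_euler_lagrange hωsym hp hα hmin hφ
  have hne : ∃ j, φ j ≠ 0 := by
    by_contra! hzero
    simp [weightedPowerSum, hzero, zero_rpow (by positivity : α ≠ 0)] at hφ
  have hpos := forall_pos_of_sum_eq_zero_at_zeros (φ := φ) hωnonneg hconn (fun j => abs_nonneg _)
    (fun a ha => by simpa [ha] using hEL a) hne
  refine ⟨-yamabeFunctional μ ω h p φ, φ, hpos, fun i => ?_⟩
  have hi := hEL i
  rw [abs_rpow_sub_two_mul_self (hpos i), abs_rpow_sub_two_mul_self (hpos i)] at hi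
  have hμi := (hμ i).ne'
  rw [pLaplacian, one_div]
  linear_combination (μ i)⁻¹ * hi
    - (h i * φ i ^ (p - 1) + yamabeFunctional μ ω h p φ * f i * φ i ^ (α - 1)) * inv_mul_cancel₀ hμi

/-- **The p-th Yamabe equation on a finite connected graph.**
If `α ≥ p > 1`, `f > 0`, then `Δ_p φ + h φ^{p-1} = λ f φ^{α-1}` has a positive
solution `φ` for some constant `λ ∈ ℝ`. -/
theorem pth_yamabe_equation_has_positive_solution
    {V : Type*} [Fintype V] [Nonempty V]
    (μ : V → ℝ) (hμ : ∀ i, 0 < μ i)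
    (ω : V → V → ℝ) (hωsym : ∀ i j, ω i j = ω j i)
    (hωnonneg : ∀ i j, 0 ≤ ω i j) (hωloop : ∀ i, ω i i = 0)
    (hconn : ∀ i j : V, Relation.ReflTransGen (fun a b => 0 < ω a b) i j)
    (h f : V → ℝ) (hf : ∀ i, 0 < f i)
    (p α : ℝ) (hp : 1 < p) (hpα : p ≤ α) :
    ∃ (lam : ℝ) (φ : V → ℝ), (∀ i, 0 < φ i) ∧
      ∀ i, pLaplacian μ ω p φ i + h i * φ i ^ (p - 1) = lam * f i * φ i ^ (α - 1) :=
  pth_yamabe_equation_has_positive_solution_general μ hμ ω hωsym hωnonneg hconn h f hf p α hp hpα
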